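/- Let H1 be a hypergraph, let M_i and M_{i+1} be sets of nodes of H1, let C_i be an [M_i]-component of H1, and let v_i = (M_i,C_i). Then ED(v_i,M_{i+1}) = ∅ if, and only if, every [v_i,M_{i+1}]-escape component C_{i+1} satisfies C_{i+1} ⊆ C_i. -/

import Mathlib

/-- A hypergraph, identified (as in the paper) with its finite set of
finite hyperedges; its nodes are the vertices occurring in some hyperedge. -/
structure HGraph (α : Type*) where
  edges : Finset (Finset α)

namespace HGraph

variable {α : Type*}

/-- The set of nodes of a hypergraph. -/
def nodes (H : HGraph α) : Set α := {x | ∃ h ∈ H.edges, x ∈ h}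

/-- `H1 ≤ H2`: every hyperedge of `H1` is contained in some hyperedge of `H2`. -/
def HLe (H1 H2 : HGraph α) : Prop := ∀ h1 ∈ H1.edges, ∃ h2 ∈ H2.edges, h1 ⊆ h2

/-- `H` is contained in `H'`. -/
def Contained (H H' : HGraph α) : Prop :=
  ∀ h ∈ H.edges, h ∉ H'.edges → ∃ h' ∈ H'.edges, h' ∉ H.edges ∧ h ⊆ h'

/-- `H` is properly contained in `H'`. -/
def ProperlyContained (H H' : HGraph α) : Prop := H.Contained H' ∧ H ≠ H'

/-- A hypergraph is reduced if no hyperedge is a proper subset of another one. -/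
def Reduced (H : HGraph α) : Prop := ∀ h ∈ H.edges, ∀ h' ∈ H.edges, ¬ h ⊂ h'

end HGraph

/-- The type of hyperedges of `H`. -/
abbrev Hyperedge {α : Type*} (H : HGraph α) := {h : Finset α // h ∈ H.edges}

/-- A join tree for a hypergraph `H`: a tree whose vertices are the hyperedges of `H`
such that, for every node `X`, the hyperedges containing `X` induce a connected subtree. -/
structure JoinTree {α : Type*} (H : HGraph α) where
  T : SimpleGraph (Hyperedge H)
  isTree : T.IsTree
  node_connected : ∀ X : α, (T.induce {h : Hyperedge H | X ∈ h.1}).Preconnected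

/-- A hypergraph is acyclic iff it has a join tree. -/
def HGraph.Acyclic {α : Type*} (H : HGraph α) : Prop := Nonempty (JoinTree H)

/-- `Ha` is a tree projection of `H1` w.r.t. `H2`. -/
def IsTreeProjection {α : Type*} (H1 H2 Ha : HGraph α) : Prop :=
  Ha.Acyclic ∧ H1.HLe Ha ∧ Ha.HLe H2

/-- `Ha` is a minimal tree projection of `H1` w.r.t. `H2`. -/
def IsMinimalTreeProjection {α : Type*} (H1 H2 Ha : HGraph α) : Prop :=
  IsTreeProjection H1 H2 Ha ∧
  ∀ Ha' : HGraph α, IsTreeProjection H1 H2 Ha' → ¬ Ha'.ProperlyContained Ha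

namespace HGraph

variable {α : Type*}

/-- `X` is `[V]`-adjacent to `Y`: some hyperedge contains both outside of `V`. -/
def Adj (H : HGraph α) (V : Set α) (X Y : α) : Prop :=
  ∃ h ∈ H.edges, X ∈ h ∧ Y ∈ h ∧ X ∉ V ∧ Y ∉ V

/-- There is a `[V]`-path from `X` to `Y`. -/
def VPath (H : HGraph α) (V : Set α) : α → α → Prop :=
  Relation.ReflTransGen (H.Adj V)

/-- The set `W` is `[V]`-connected. -/
def VConnected (H : HGraph α) (V W : Set α) : Prop :=
  ∀ X ∈ W, ∀ Y ∈ W, H.VPath V X Y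

/-- `C` is a `[V]`-component of `H`: a maximal `[V]`-connected nonempty subset
of `nodes(H) \ V`. -/
def IsComponent (H : HGraph α) (V C : Set α) : Prop :=
  C.Nonempty ∧ C ⊆ H.nodes \ V ∧ H.VConnected V C ∧
  ∀ C' : Set α, C ⊆ C' → C' ⊆ H.nodes \ V → H.VConnected V C' → C' = C

/-- The frontier `Fr(C,H)`: the union of all hyperedges meeting `C`. -/
def Fr (H : HGraph α) (C : Set α) : Set α :=
  {x | ∃ h ∈ H.edges, x ∈ h ∧ ∃ y ∈ C, y ∈ h}

/-- The border `∂(C,H) = Fr(C,H) \ C`. -/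
def border (H : HGraph α) (C : Set α) : Set α := H.Fr C \ C

/-- `X` `[V]`-touches the set `W`: `X` is `[∅]`-adjacent to some node `Z` from which
there is a `[V]`-path to some node of `W`. -/
def Touches (H : HGraph α) (V : Set α) (X : α) (W : Set α) : Prop :=
  ∃ Z : α, H.Adj ∅ X Z ∧ ∃ Y ∈ W, H.VPath V Z Y

end HGraph

namespace JoinTree

variable {α : Type*} {H : HGraph α}

/-- The vertices of the subtree rooted at `h_s` when the join tree is rooted at
(the side of) `h_r`, for adjacent vertices `h_r`, `h_s`. -/
def subtreeVerts (JT : JoinTree H) (h_r h_s : Hyperedge H) : Set (Hyperedge H) :=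
  {v | JT.T.dist v h_s < JT.T.dist v h_r}

/-- The nodes occurring in the vertices of the subtree rooted at `h_s` (w.r.t. `h_r`). -/
def subtreeNodes (JT : JoinTree H) (h_r h_s : Hyperedge H) : Set α :=
  {x | ∃ v ∈ JT.subtreeVerts h_r h_s, x ∈ v.1}

/-- `h_s` is a child of `h_r` in the join tree rooted at `root`. -/
def IsChild (JT : JoinTree H) (root h_r h_s : Hyperedge H) : Prop :=
  JT.T.Adj h_r h_s ∧ JT.T.dist root h_r < JT.T.dist root h_s

end JoinTree

/-- The sub-hypergraph of `H1` induced by the node set `N` is `[∅]`-connected. -/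
def InducedConn {α : Type*} (H1 : HGraph α) (N : Set α) : Prop :=
  ∀ X ∈ N, ∀ Y ∈ N,
    Relation.ReflTransGen
      (fun a b => a ∈ N ∧ b ∈ N ∧ ∃ h ∈ H1.edges, a ∈ h ∧ b ∈ h) X Y

/-- A join tree of `Ha` is `H1`-connected. -/
def JoinTree.IsConnectedFor {α : Type*} {Ha : HGraph α} (JT : JoinTree Ha)
    (H1 : HGraph α) : Prop :=
  ∀ h_r h_s : Hyperedge Ha, JT.T.Adj h_r h_s → InducedConn H1 (JT.subtreeNodes h_r h_s)

/-- `C` is the component `C⊤(h)` associated with vertex `h` of the join tree rooted at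
`root`: conventionally `nodes(H1)` for the root, and otherwise the unique
`[h_p]`-component of `H1` (for `h_p` the parent of `h`) determined by the subtree at `h`. -/
def CtopAt {α : Type*} (H1 : HGraph α) {Ha : HGraph α} (JT : JoinTree Ha)
    (root h : Hyperedge Ha) (C : Set α) : Prop :=
  (h = root ∧ C = H1.nodes) ∨
  ∃ h_p : Hyperedge Ha, JT.IsChild root h_p h ∧ H1.IsComponent (h_p.1 : Set α) C ∧
    JT.subtreeNodes h_p h = C ∪ ((h.1 : Set α) ∩ (h_p.1 : Set α))

/-- The join tree `JT` of `Ha`, rooted at `root`, is an `H1`-component tree. -/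
def JoinTree.IsComponentTreeFor {α : Type*} {Ha : HGraph α} (JT : JoinTree Ha)
    (H1 : HGraph α) (root : Hyperedge Ha) : Prop :=
  (∀ h_r h_s : Hyperedge Ha, JT.IsChild root h_r h_s →
    (∃! C : Set α, H1.IsComponent (h_r.1 : Set α) C ∧
      JT.subtreeNodes h_r h_s = C ∪ ((h_s.1 : Set α) ∩ (h_r.1 : Set α))) ∧
    (∀ C : Set α, H1.IsComponent (h_r.1 : Set α) C →
      JT.subtreeNodes h_r h_s = C ∪ ((h_s.1 : Set α) ∩ (h_r.1 : Set α)) →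
      ((h_s.1 : Set α) ∩ C).Nonempty ∧ (h_s.1 : Set α) ⊆ H1.Fr C)) ∧
  (∀ h_r : Hyperedge Ha, ∀ Ctop : Set α, CtopAt H1 JT root h_r Ctop →
    ∀ C_r : Set α, H1.IsComponent (h_r.1 : Set α) C_r → C_r ⊆ Ctop →
    ∃! h_s : Hyperedge Ha, JT.IsChild root h_r h_s ∧
      JT.subtreeNodes h_r h_s = C_r ∪ ((h_s.1 : Set α) ∩ (h_r.1 : Set α)))

/-! ### The Robber and Captain game -/

/-- A position for the Captain: a set of nodes included in some hyperedge of `H2`. -/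
def IsPosition {α : Type*} (H2 : HGraph α) (M : Set α) : Prop :=
  ∃ h2 ∈ H2.edges, M ⊆ (h2 : Set α)

/-- A configuration of the game `R&C(H1,H2)`. -/
def IsConfig {α : Type*} (H1 H2 : HGraph α) (M C : Set α) : Prop :=
  IsPosition H2 M ∧ (H1.IsComponent M C ∨ C = ∅ ∨ (M = ∅ ∧ C = H1.nodes))

/-- `C_j` is an `[(M_i,C_i),M_j]`-escape component: an `[M_j]`-component of `H1`
such that `C_i ∪ C_j` is `[M_i ∩ M_j]`-connected. -/
def EscapeComp {α : Type*} (H1 : HGraph α) (M_i C_i M_j C_j : Set α) : Prop :=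
  H1.IsComponent M_j C_j ∧ H1.VConnected (M_i ∩ M_j) (C_i ∪ C_j)

/-- The escape door `ED((M_i,C),M') = ∂(C,H1) \ M'` (it only depends on `C` and `M'`). -/
def escapeDoor {α : Type*} (H1 : HGraph α) (C M' : Set α) : Set α :=
  H1.border C \ M'

/-- `σ` is a strategy for the Captain in `R&C(H1,H2)`. -/
def IsStrategy {α : Type*} (H1 H2 : HGraph α) (σ : Set α → Set α → Set α) : Prop :=
  ∀ M C : Set α, IsConfig H1 H2 M C → C ≠ ∅ →
    IsPosition H2 (σ M C) ∧ σ M C ⊆ H1.Fr C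

/-- One step of the game played according to `σ`: from configuration `p` the Captain
moves to `σ p.1 p.2`, and the Robber either selects an escape component or is captured. -/
def GameStep {α : Type*} (H1 : HGraph α) (σ : Set α → Set α → Set α)
    (p q : Set α × Set α) : Prop :=
  p.2 ≠ ∅ ∧ q.1 = σ p.1 p.2 ∧
    (EscapeComp H1 p.1 p.2 q.1 q.2 ∨
      ((∀ C : Set α, ¬ EscapeComp H1 p.1 p.2 q.1 C) ∧ q.2 = ∅))

/-- `p` is a vertex of the game tree `T(σ)` (reachable from the root `(∅, nodes(H1))`). -/
def InGameTree {α : Type*} (H1 : HGraph α) (σ : Set α → Set α → Set α)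
    (p : Set α × Set α) : Prop :=
  Relation.ReflTransGen (GameStep H1 σ) (∅, H1.nodes) p

/-- `σ` is winning: the game tree `T(σ)` is finite, i.e., there is no infinite play. -/
def Winning {α : Type*} (H1 : HGraph α) (σ : Set α → Set α → Set α) : Prop :=
  ¬ ∃ f : ℕ → Set α × Set α, f 0 = (∅, H1.nodes) ∧ ∀ n, GameStep H1 σ (f n) (f (n + 1))

/-- `M_j` is a monotone move in `(M_i, C_i)`. -/
def MonotoneMove {α : Type*} (H1 : HGraph α) (M_i C_i M_j : Set α) : Prop :=
  ∀ C : Set α, EscapeComp H1 M_i C_i M_j C → C ⊆ C_i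

/-- `σ` is a monotone strategy. -/
def MonotoneStrategy {α : Type*} (H1 : HGraph α) (σ : Set α → Set α → Set α) : Prop :=
  ∀ p q : Set α × Set α, InGameTree H1 σ p → GameStep H1 σ p q →
    MonotoneMove H1 p.1 p.2 q.1


/-!
If the escape door is empty, every hyperedge leaving `C_i` through a node outside `M_i`
stays in `C_i` by maximality, and one leaving it through a node of `M_i` must hit `M_j`;
so `C_i` is closed under `[M_i ∩ M_j]`-adjacency, and anything `[M_i ∩ M_j]`-connected to
it lies inside it. Conversely, a node `x` of the escape door is `[M_i ∩ M_j]`-adjacent to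
`C_i`, so its `[M_j]`-component is an escape component containing `x ∉ C_i`.
-/

namespace HGraph

variable {α : Type*} {H : HGraph α} {V W S : Set α} {a b : α}

instance (V : Set α) : Std.Symm (H.Adj V) where
  symm _ _ := fun ⟨h, hh, ha, hb, haV, hbV⟩ => ⟨h, hh, hb, ha, hbV, haV⟩

theorem VPath.symm (hp : H.VPath V a b) : H.VPath V b a :=
  Std.Symm.symm (r := Relation.ReflTransGen (H.Adj V)) a b hp

theorem Adj.anti (hWV : W ⊆ V) : H.Adj V a b → H.Adj W a b :=
  fun ⟨h, hh, ha, hb, haV, hbV⟩ => ⟨h, hh, ha, hb, fun hW => haV (hWV hW),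
    fun hW => hbV (hWV hW)⟩

theorem VConnected.anti (hWV : W ⊆ V) (hS : H.VConnected V S) : H.VConnected W S :=
  fun X hX Y hY => Relation.ReflTransGen.mono (fun _ _ => Adj.anti hWV) X Y (hS X hX Y hY)

theorem VPath.mem_of_adj_closed (hS : ∀ a b, H.Adj V a b → a ∈ S → b ∈ S)
    (hp : H.VPath V a b) (ha : a ∈ S) : b ∈ S := by
  induction hp with
  | refl => exact ha
  | tail _ hbc ih => exact hS _ _ hbc ih

theorem VConnected.union_of_adj {A B : Set α} (hA : H.VConnected V A)
    (hB : H.VConnected V B) (ha : a ∈ A) (hb : b ∈ B) (hab : H.Adj V a b) :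
    H.VConnected V (A ∪ B) := by
  have hAB : ∀ X ∈ A, ∀ Y ∈ B, H.VPath V X Y := fun X hX Y hY =>
    ((hA X hX a ha).tail hab).trans (hB b hb Y hY)
  rintro X (hX | hX) Y (hY | hY)
  · exact hA X hX Y hY
  · exact hAB X hX Y hY
  · exact (hAB Y hY X hX).symm
  · exact hB X hX Y hY

theorem Adj.right_mem (hab : H.Adj V a b) : b ∈ H.nodes \ V :=
  let ⟨h, hh, _, hb, _, hbV⟩ := hab
  ⟨⟨h, hh, hb⟩, hbV⟩

theorem IsComponent.mem_of_adj {C : Set α} (hC : H.IsComponent V C) (hab : H.Adj V a b)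
    (ha : a ∈ C) : b ∈ C := by
  have hbC : insert b C = C := by
    refine hC.2.2.2 _ (Set.subset_insert _ _) ?_ ?_
    · exact Set.insert_subset hab.right_mem hC.2.1
    · have hb : H.VConnected V {b} := by
        rintro X rfl Y rfl
        exact .refl
      exact hb.union_of_adj hC.2.2.1 rfl ha (Std.Symm.symm _ _ hab)
  exact hbC ▸ Set.mem_insert b C

theorem isComponent_setOf_vPath (ha : a ∈ H.nodes \ V) :
    H.IsComponent V {z | H.VPath V a z} := by
  have hconn : H.VConnected V {z | H.VPath V a z} := fun X hX Y hY => hX.symm.trans hY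
  refine ⟨⟨a, .refl⟩, fun z hz => ?_, hconn, fun C' hsub _ hC' =>
    (Set.Subset.antisymm (fun z hz => hC' a (hsub .refl) z hz) hsub)⟩
  cases hz with
  | refl => exact ha
  | tail _ hbz => exact hbz.right_mem

end HGraph

open HGraph

theorem adj_closed_of_escapeDoor_eq_empty {α : Type*} {H1 : HGraph α} {M_i M_j C_i : Set α}
    (hC : H1.IsComponent M_i C_i) (hED : escapeDoor H1 C_i M_j = ∅) {a b : α}
    (hab : H1.Adj (M_i ∩ M_j) a b) (ha : a ∈ C_i) : b ∈ C_i := by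
  obtain ⟨h, hh, hah, hbh, haM, hbM⟩ := hab
  by_cases hbMi : b ∈ M_i
  · have hbED : b ∈ escapeDoor H1 C_i M_j :=
      ⟨⟨⟨h, hh, hbh, a, ha, hah⟩, fun hbC => (hC.2.1 hbC).2 hbMi⟩, fun hbMj => hbM ⟨hbMi, hbMj⟩⟩
    exact absurd hbED (hED ▸ Set.notMem_empty b)
  · exact hC.mem_of_adj ⟨h, hh, hah, hbh, (hC.2.1 ha).2, hbMi⟩ ha

theorem escapeComp_setOf_vPath_of_mem_escapeDoor {α : Type*} {H1 : HGraph α}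
    {M_i M_j C_i : Set α} (hC : H1.IsComponent M_i C_i) {x : α}
    (hx : x ∈ escapeDoor H1 C_i M_j) : EscapeComp H1 M_i C_i M_j {z | H1.VPath M_j x z} := by
  obtain ⟨⟨⟨h, hh, hxh, y, hyC, hyh⟩, -⟩, hxMj⟩ := hx
  have hyx : H1.Adj (M_i ∩ M_j) y x :=
    ⟨h, hh, hyh, hxh, fun hy => (hC.2.1 hyC).2 hy.1, fun hx => hxMj hx.2⟩
  have hD := isComponent_setOf_vPath ⟨hyx.right_mem.1, hxMj⟩
  exact ⟨hD, (hC.2.2.1.anti Set.inter_subset_left).union_of_adj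
    (hD.2.2.1.anti Set.inter_subset_right) hyC .refl hyx⟩

theorem escape_door_empty_iff_general {α : Type*} (H1 : HGraph α)
    (M_i M_j C_i : Set α)
    (hC : H1.IsComponent M_i C_i) :
    escapeDoor H1 C_i M_j = ∅ ↔
      ∀ C_j : Set α, EscapeComp H1 M_i C_i M_j C_j → C_j ⊆ C_i := by
  constructor
  · intro hED C_j hEsc x hx
    obtain ⟨y, hy⟩ := hC.1
    exact (hEsc.2 y (.inl hy) x (.inr hx)).mem_of_adj_closed
      (fun _ _ => adj_closed_of_escapeDoor_eq_empty hC hED) hy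
  · intro hmono
    exact Set.eq_empty_iff_forall_notMem.mpr fun x hx =>
      hx.1.2 (hmono _ (escapeComp_setOf_vPath_of_mem_escapeDoor hC hx) .refl)

theorem escape_door_empty_iff {α : Type*} (H1 : HGraph α)
    (M_i M_j C_i : Set α) (hMi : M_i ⊆ H1.nodes) (hMj : M_j ⊆ H1.nodes)
    (hC : H1.IsComponent M_i C_i) :
    escapeDoor H1 C_i M_j = ∅ ↔
      ∀ C_j : Set α, EscapeComp H1 M_i C_i M_j C_j → C_j ⊆ C_i :=
  escape_door_empty_iff_general H1 M_i M_j C_i hC
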